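/- Let G be a finitely generated nilpotent group of class at most 2 (i.e., G' ⊆ Z(G)) that is not torsion-free, and suppose G' is infinite and torsion-free. Then IA(G) is isomorphic to Inn(G) if and only if G' is isomorphic to the infinite cyclic group ℤ and the torsion-free rank of G/Z(G) equals the torsion-free rank of G/G'. -/

import Mathlib

/-- The group of IA-automorphisms of `G`: automorphisms inducing the identity on the
abelianization `G/G'`. -/
def IA (G : Type*) [Group G] : Subgroup (MulAut G) where
  carrier := {α | ∀ g : G, g⁻¹ * α g ∈ commutator G}
  one_mem' := by intro g; simp
  mul_mem' := by
    intro α β hα hβ g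
    have h : g⁻¹ * (α * β) g = (g⁻¹ * β g) * ((β g)⁻¹ * α (β g)) := by
      simp [MulAut.mul_apply, mul_assoc]
    rw [Set.mem_setOf_eq] at *
    rw [h]
    exact mul_mem (hβ g) (hα (β g))
  inv_mem' := by
    intro α hα g
    have h := hα (α⁻¹ g)
    rw [MulAut.apply_inv_self] at h
    simpa using inv_mem h

/-- A monoid is torsion-free if every non-identity element has infinite order
(the definition of `Monoid.IsTorsionFree` in the older Mathlib, since removed). -/
def Monoid.IsTorsionFree (G : Type*) [Monoid G] : Prop :=
  ∀ g : G, g ≠ 1 → ¬IsOfFinOrder g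

/-- The group of inner automorphisms of `G`. -/
def Inn (G : Type*) [Group G] : Subgroup (MulAut G) :=
  (MulAut.conj : G →* MulAut G).range

/-- The torsion-free rank of a group: the supremum of ranks of free abelian subgroups.
For finitely generated (virtually) abelian groups this is the usual torsion-free rank. -/
noncomputable def torsionFreeRank (H : Type*) [Group H] : ℕ :=
  sSup {n : ℕ | ∃ f : Multiplicative (Fin n → ℤ) →* H, Function.Injective f}

/-!
For `G` of class 2, an IA-automorphism is `g ↦ g · f(gG')` for a unique homomorphism
`f : G/G' → G'`, so `IA(G) ≅ Hom(G/G', G')`; as `G'` is free abelian of some rank `k`, this is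
free abelian of rank `r·k`, where `r` is the torsion-free rank of `G/G'`. On the other side
`Inn(G) ≅ G/Z(G)`, which is torsion-free because `[g^n, h] = [g, h]^n` and `G'` is torsion-free,
hence free abelian of some rank `p`; and `1 ≤ p ≤ r` since `G/G'` maps onto `G/Z(G) ≠ 1`.
Thus `IA(G) ≅ Inn(G)` iff `r·k = p`, i.e. iff `k = 1` and `p = r`.
-/

open Module Subgroup
open scoped commutatorElement IsMulCommutative

theorem torsionFreeRank_eq_finrank (H : Type*) [CommGroup H] [Module.Finite ℤ (Additive H)] :
    torsionFreeRank H = finrank ℤ (Additive H) := by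
  suffices {n : ℕ | ∃ f : Multiplicative (Fin n → ℤ) →* H, Function.Injective f} =
      Set.Iic (finrank ℤ (Additive H)) by
    rw [torsionFreeRank, this, csSup_Iic]
  ext n
  constructor
  · rintro ⟨f, hf⟩
    simpa using LinearMap.finrank_le_finrank_of_injective
      (f := (MonoidHom.toAdditiveRight f).toIntLinearMap) hf
  · intro hn
    obtain ⟨v, hv⟩ := exists_linearIndependent_of_le_finrank hn
    exact ⟨AddMonoidHom.toMultiplicativeLeft (Fintype.linearCombination ℤ v).toAddMonoidHom,
      (linearIndependent_iff_injective_fintypeLinearCombination.mp hv).comp Additive.ofMul.injective⟩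

theorem nonempty_mulEquiv_iff_finrank_eq {H K : Type*} [CommGroup H] [CommGroup K]
    [Module.Finite ℤ (Additive H)] [Module.Free ℤ (Additive H)]
    [Module.Finite ℤ (Additive K)] [Module.Free ℤ (Additive K)] :
    Nonempty (H ≃* K) ↔ finrank ℤ (Additive H) = finrank ℤ (Additive K) := by
  rw [← FiniteDimensional.nonempty_linearEquiv_iff_finrank_eq]
  exact ⟨fun ⟨e⟩ => ⟨(MulEquiv.toAdditive e).toIntLinearEquiv⟩,
    fun ⟨e⟩ => ⟨MulEquiv.toAdditive.symm e.toAddEquiv⟩⟩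

theorem finrank_additive_le_of_surjective {H K : Type*} [CommGroup H] [CommGroup K]
    [Module.Finite ℤ (Additive H)] {f : H →* K} (hf : Function.Surjective f) :
    finrank ℤ (Additive K) ≤ finrank ℤ (Additive H) :=
  LinearMap.finrank_le_finrank_of_surjective (f := (MonoidHom.toAdditive f).toIntLinearMap) hf

theorem Submodule.torsion_le_ker {R M N : Type*} [CommRing R] [IsDomain R] [AddCommGroup M]
    [Module R M] [AddCommGroup N] [Module R N] [Module.IsTorsionFree R N] (f : M →ₗ[R] N) :
    Submodule.torsion R M ≤ LinearMap.ker f := by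
  rintro x ⟨a, hax⟩
  rw [LinearMap.mem_ker, ← smul_eq_zero_iff_right (nonZeroDivisors.coe_ne_zero a),
    ← map_smul, ← Submonoid.smul_def, hax, map_zero]

noncomputable def linearMapQuotTorsionEquiv (R M N : Type*) [CommRing R] [IsDomain R]
    [AddCommGroup M] [Module R M] [AddCommGroup N] [Module R N] [Module.IsTorsionFree R N] :
    (M ⧸ Submodule.torsion R M →ₗ[R] N) ≃ₗ[R] (M →ₗ[R] N) :=
  .ofBijective (LinearMap.lcomp R N (Submodule.torsion R M).mkQ)
    ⟨fun _ _ h => Submodule.linearMap_qext _ h,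
      fun f => ⟨(Submodule.torsion R M).liftQ f (Submodule.torsion_le_ker f),
        (Submodule.torsion R M).liftQ_mkQ f (Submodule.torsion_le_ker f)⟩⟩

def MonoidHom.toAdditiveAddEquiv {Q C : Type*} [CommGroup Q] [CommGroup C] :
    Additive (Q →* C) ≃+ (Additive Q →+ Additive C) where
  toEquiv := Additive.toMul.trans MonoidHom.toAdditive
  map_add' _ _ := rfl

section HomToTorsionFree

variable (Q C : Type*) [CommGroup Q] [CommGroup C] [IsMulTorsionFree C]

noncomputable def monoidHomEquivLinearMapQuotTorsion :
    Additive (Q →* C) ≃ₗ[ℤ] (Additive Q ⧸ Submodule.torsion ℤ (Additive Q) →ₗ[ℤ] Additive C) :=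
  (MonoidHom.toAdditiveAddEquiv.trans (addMonoidHomLequivInt ℤ).toAddEquiv).toIntLinearEquiv.trans
    (linearMapQuotTorsionEquiv ℤ _ _).symm

variable [Module.Finite ℤ (Additive Q)] [Module.Finite ℤ (Additive C)]

instance : Module.Finite ℤ (Additive (Q →* C)) :=
  .equiv (monoidHomEquivLinearMapQuotTorsion Q C).symm

instance : Module.Free ℤ (Additive (Q →* C)) :=
  .of_equiv (monoidHomEquivLinearMapQuotTorsion Q C).symm

theorem finrank_additive_monoidHom :
    finrank ℤ (Additive (Q →* C)) = finrank ℤ (Additive Q) * finrank ℤ (Additive C) := by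
  rw [(monoidHomEquivLinearMapQuotTorsion Q C).finrank_eq, finrank_linearMap,
    finrank_quotient_eq_of_le_torsion le_rfl]

end HomToTorsionFree

section CommutatorLeCenter

variable {G : Type*} [Group G] (h2 : commutator G ≤ center G)
include h2

theorem conj_commutatorElement_of_le_center (g a b : G) : g * ⁅a, b⁆ * g⁻¹ = ⁅a, b⁆ := by
  rw [mem_center_iff.mp (h2 (commutator_mem_commutator (mem_top a) (mem_top b))) g,
    mul_inv_cancel_right]

theorem commutatorElement_mul_left_of_le_center (a b c : G) : ⁅a * b, c⁆ = ⁅a, c⁆ * ⁅b, c⁆ := by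
  rw [commutatorElement_mul_left_eq_conj_mul, conj_commutatorElement_of_le_center h2,
    mem_center_iff.mp (h2 (commutator_mem_commutator (mem_top a) (mem_top c)))]

theorem commutatorElement_mul_right_of_le_center (a b c : G) : ⁅a, b * c⁆ = ⁅a, b⁆ * ⁅a, c⁆ := by
  rw [commutatorElement_mul_right_eq_mul_conj, mul_assoc _ b, mul_assoc,
    conj_commutatorElement_of_le_center h2]

theorem commutatorElement_inv_left_of_le_center (a b : G) : ⁅a⁻¹, b⁆ = ⁅a, b⁆⁻¹ := by
  rw [commutatorElement_inv_left, ← inv_inv a, inv_inv a⁻¹, conj_commutatorElement_of_le_center h2,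
    commutatorElement_inv]

theorem commutatorElement_inv_right_of_le_center (a b : G) : ⁅a, b⁻¹⁆ = ⁅a, b⁆⁻¹ := by
  rw [commutatorElement_inv_right, ← inv_inv b, inv_inv b⁻¹, conj_commutatorElement_of_le_center h2,
    commutatorElement_inv]

theorem commutatorElement_pow_left_of_le_center (a b : G) (n : ℕ) : ⁅a ^ n, b⁆ = ⁅a, b⁆ ^ n := by
  induction n with
  | zero => simp
  | succ n ih => rw [pow_succ, commutatorElement_mul_left_of_le_center h2, ih, pow_succ]

theorem commutatorElement_mul_mem_center_of_le_center (a b : G) {x y : G} (hx : x ∈ center G)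
    (hy : y ∈ center G) : ⁅a * x, b * y⁆ = ⁅a, b⁆ := by
  rw [commutatorElement_mul_left_of_le_center h2, commutatorElement_mul_right_of_le_center h2,
    commutatorElement_eq_one_iff_mul_comm.mpr (mem_center_iff.mp hy a),
    commutatorElement_eq_one_iff_mul_comm.mpr (mem_center_iff.mp hx _).symm, mul_one, mul_one]

theorem Group.fg_commutator_of_le_center [hG : Group.FG G] : Group.FG (commutator G) := by
  obtain ⟨S, hS, hSfin⟩ := Group.fg_iff.mp hG
  set K := closure ((fun p : G × G => ⁅p.1, p.2⁆) '' (S ×ˢ S))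
  suffices K = commutator G by
    rw [Group.fg_iff_subgroup_fg, ← this, Subgroup.fg_iff]
    exact ⟨_, rfl, (hSfin.prod hSfin).image _⟩
  refine le_antisymm (closure_le _ |>.mpr ?_) ?_
  · rintro _ ⟨⟨a, b⟩, -, rfl⟩
    exact commutator_mem_commutator (mem_top a) (mem_top b)
  rw [commutator_eq_closure, closure_le]
  rintro _ ⟨g, h, rfl⟩
  have hg : g ∈ closure S := hS ▸ mem_top g
  have hh : h ∈ closure S := hS ▸ mem_top h
  induction hg, hh using closure_induction₂ with
  | mem x y hx hy => exact subset_closure ⟨(x, y), Set.mk_mem_prod hx hy, rfl⟩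
  | one_left x _ => rw [commutatorElement_one_left]; exact one_mem K
  | one_right x _ => rw [commutatorElement_one_right]; exact one_mem K
  | mul_left x y z _ _ _ hxz hyz =>
    rw [commutatorElement_mul_left_of_le_center h2]; exact mul_mem hxz hyz
  | mul_right y z x _ _ _ hxy hxz =>
    rw [commutatorElement_mul_right_of_le_center h2]; exact mul_mem hxy hxz
  | inv_left x y _ _ hxy => rw [commutatorElement_inv_left_of_le_center h2]; exact inv_mem hxy
  | inv_right x y _ _ hxy => rw [commutatorElement_inv_right_of_le_center h2]; exact inv_mem hxy

theorem isMulTorsionFree_quotient_center_of_le_center [IsMulTorsionFree (commutator G)] :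
    IsMulTorsionFree (G ⧸ center G) := by
  have : IsMulCommutative (G ⧸ center G) :=
    Normal.quotient_commutative_iff_commutator_le.mpr h2
  refine .of_not_isOfFinOrder fun q hq hfin => hq ?_
  induction q using QuotientGroup.induction_on with | H g =>
  obtain ⟨n, hn, hgn⟩ := isOfFinOrder_iff_pow_eq_one.mp hfin
  rw [← QuotientGroup.mk_pow, QuotientGroup.eq_one_iff, mem_center_iff] at hgn
  rw [QuotientGroup.eq_one_iff, mem_center_iff]
  intro h
  have hpow : (⟨⁅g, h⁆, commutator_mem_commutator (mem_top g) (mem_top h)⟩ : commutator G) ^ n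
      = 1 := by
    ext
    rw [SubgroupClass.coe_pow, ← commutatorElement_pow_left_of_le_center h2, OneMemClass.coe_one,
      commutatorElement_eq_one_iff_mul_comm]
    exact (hgn h).symm
  have hgh := congrArg Subtype.val ((pow_eq_one_iff_left hn.ne').mp hpow)
  exact (commutatorElement_eq_one_iff_mul_comm.mp hgh).symm

end CommutatorLeCenter

section IA

variable {G : Type*} [Group G] (h2 : commutator G ≤ center G)
include h2

theorem apply_eq_self_of_mem_IA {α : MulAut G} (hα : α ∈ IA G) {c : G}
    (hc : c ∈ commutator G) : α c = c := by
  rw [commutator_eq_closure] at hc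
  induction hc using closure_induction with
  | mem _ hx =>
    obtain ⟨a, b, rfl⟩ := hx
    calc α ⁅a, b⁆ = ⁅a * (a⁻¹ * α a), b * (b⁻¹ * α b)⁆ := by
          rw [map_commutatorElement, mul_inv_cancel_left, mul_inv_cancel_left]
      _ = ⁅a, b⁆ := commutatorElement_mul_mem_center_of_le_center h2 a b (h2 (hα a)) (h2 (hα b))
  | one => exact map_one α
  | mul x y _ _ ihx ihy => rw [map_mul, ihx, ihy]
  | inv x _ ih => rw [map_inv, ih]

def mulAutOfHom (f : G ⧸ commutator G →* commutator G) : MulAut G where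
  toFun g := g * f g
  invFun g := g * (f g)⁻¹
  left_inv g := by
    simp only [QuotientGroup.mk_mul_of_mem g (f g).2, InvMemClass.coe_inv, mul_inv_cancel_right]
  right_inv g := by
    simp only [InvMemClass.coe_inv, QuotientGroup.mk_mul_of_mem g (inv_mem (f g).2),
      inv_mul_cancel_right]
  map_mul' x y := by
    simp only [QuotientGroup.mk_mul, map_mul, coe_mul, ← mul_assoc]
    rw [mul_assoc x y, mem_center_iff.mp (h2 (f x).2) y, ← mul_assoc]

theorem mulAutOfHom_apply (f : G ⧸ commutator G →* commutator G) (g : G) :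
    mulAutOfHom h2 f g = g * f g := rfl

def homOfMemIA (α : IA G) : G ⧸ commutator G →* commutator G :=
  QuotientGroup.lift (commutator G)
    { toFun g := ⟨g⁻¹ * α.1 g, α.2 g⟩
      map_one' := by ext; simp
      map_mul' x y := by
        ext
        calc (x * y)⁻¹ * α.1 (x * y) = y⁻¹ * (x⁻¹ * α.1 x) * α.1 y := by rw [map_mul]; group
          _ = x⁻¹ * α.1 x * (y⁻¹ * α.1 y) := by
            rw [mem_center_iff.mp (h2 (α.2 x)) y⁻¹]; group }
    (fun c hc => by ext; simp [apply_eq_self_of_mem_IA h2 α.2 hc])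

theorem homOfMemIA_mk (α : IA G) (g : G) : (homOfMemIA h2 α g : G) = g⁻¹ * α.1 g := rfl

noncomputable def homMulEquivIA [IsMulCommutative (commutator G)] :
    (G ⧸ commutator G →* commutator G) ≃* IA G where
  toFun f := ⟨mulAutOfHom h2 f, fun g => by simp [mulAutOfHom_apply]⟩
  invFun := homOfMemIA h2
  left_inv f := by
    ext g
    simp [homOfMemIA_mk, mulAutOfHom_apply]
  right_inv α := by
    ext g
    simp [homOfMemIA_mk, mulAutOfHom_apply]
  map_mul' f₁ f₂ := by
    ext g
    simp only [MonoidHom.mul_apply, coe_mul, MulAut.mul_apply, mulAutOfHom_apply,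
      QuotientGroup.mk_mul_of_mem g (f₂ g).2, mul_assoc]
    rw [mem_center_iff.mp (h2 (f₁ g).2) (f₂ g)]

end IA

theorem MulAut.ker_conj (G : Type*) [Group G] : (MulAut.conj : G →* MulAut G).ker = center G := by
  ext g
  simp only [MonoidHom.mem_ker, mem_center_iff, MulEquiv.ext_iff, MulAut.conj_apply,
    MulAut.one_apply, mul_inv_eq_iff_eq_mul]
  exact forall_congr' fun _ => eq_comm

theorem nontrivial_quotient_center_of_nontrivial_commutator (G : Type*) [Group G]
    [Nontrivial (commutator G)] : Nontrivial (G ⧸ center G) := by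
  rw [← not_subsingleton_iff_nontrivial, QuotientGroup.subsingleton_iff,
    ← commutator_eq_bot_iff_center_eq_top]
  exact (nontrivial_iff_ne_bot _).mp ‹_›

noncomputable def quotientCenterMulEquivInn (G : Type*) [Group G] : G ⧸ center G ≃* Inn G :=
  (QuotientGroup.quotientMulEquivOfEq (MulAut.ker_conj G).symm).trans
    (QuotientGroup.quotientKerEquivRange _)

theorem IA_iso_Inn_iff_of_commutator_torsionFree (G : Type*) [Group G] [Group.FG G]
    (h2 : commutator G ≤ Subgroup.center G)
    (hinf : Infinite (commutator G))
    (htf' : Monoid.IsTorsionFree (commutator G)) :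
    Nonempty (IA G ≃* Inn G) ↔
      Nonempty ((commutator G) ≃* Multiplicative ℤ) ∧
        torsionFreeRank (G ⧸ Subgroup.center G) = torsionFreeRank (G ⧸ commutator G) := by
  have : IsMulCommutative (commutator G) :=
    le_centralizer_iff_isMulCommutative.mp (h2.trans (center_le_centralizer _))
  have : IsMulCommutative (G ⧸ commutator G) :=
    Normal.quotient_commutative_iff_commutator_le.mpr le_rfl
  have : IsMulCommutative (G ⧸ center G) := Normal.quotient_commutative_iff_commutator_le.mpr h2
  have : Group.FG (commutator G) := Group.fg_commutator_of_le_center h2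
  have : IsMulTorsionFree (commutator G) := .of_not_isOfFinOrder fun c => htf' c
  have : IsMulTorsionFree (G ⧸ center G) := isMulTorsionFree_quotient_center_of_le_center h2
  set k := finrank ℤ (Additive (commutator G))
  set p := finrank ℤ (Additive (G ⧸ center G))
  set r := finrank ℤ (Additive (G ⧸ commutator G))
  have hk : 0 < k := finrank_pos
  have := nontrivial_quotient_center_of_nontrivial_commutator G
  have hp : 0 < p := finrank_pos
  have hpr : p ≤ r := finrank_additive_le_of_surjective
    (QuotientGroup.lift_surjective_of_surjective _ _ (QuotientGroup.mk'_surjective (center G))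
      (by rwa [QuotientGroup.ker_mk']))
  have hIA : Nonempty (IA G ≃* Inn G) ↔ r * k = p := by
    rw [← finrank_additive_monoidHom, ← nonempty_mulEquiv_iff_finrank_eq]
    exact ⟨fun ⟨e⟩ => ⟨(homMulEquivIA h2).trans (e.trans (quotientCenterMulEquivInn G).symm)⟩,
      fun ⟨e⟩ => ⟨(homMulEquivIA h2).symm.trans (e.trans (quotientCenterMulEquivInn G))⟩⟩
  have hZ : Nonempty (commutator G ≃* Multiplicative ℤ) ↔ k = 1 := by
    rw [nonempty_mulEquiv_iff_finrank_eq,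
      (AddEquiv.additiveMultiplicative ℤ).toIntLinearEquiv.finrank_eq, finrank_self]
  rw [hIA, hZ, torsionFreeRank_eq_finrank, torsionFreeRank_eq_finrank]
  change r * k = p ↔ k = 1 ∧ p = r
  clear_value k p r
  constructor
  · intro h
    obtain rfl : k = 1 := by nlinarith
    omega
  · rintro ⟨rfl, rfl⟩
    exact mul_one p
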